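/- arXiv:1207.0121 — 2 statements merged into one kernel-verified Lean document; each statement's English description precedes it below -/
import Mathlib

section
/- For a functor A : S → Set, the functor Â defined by Â(X) = Σ_{n} [X over n] ⊗_{S_n} A(n) is naturally isomorphic to the left Kan extension of A along the inclusion S → Set, where the Kan extension at X is the coend ∫^{n ∈ S} X^n × A(n). -/
/-- A functor from the skeleton `S` of finite sets and surjections to `Set`:
a family of sets with a functorial action of surjections. -/
structure SFunctor where
  obj : ℕ → Type
  map : ∀ {n m : ℕ} (f : Fin n → Fin m), Function.Surjective f → obj n → obj m
  map_id : ∀ {n : ℕ} (a : obj n), map id Function.surjective_id a = a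
  map_map : ∀ {n m k : ℕ} (f : Fin n → Fin m) (hf : Function.Surjective f)
      (g : Fin m → Fin k) (hg : Function.Surjective g) (a : obj n),
      map g hg (map f hf a) = map (g ∘ f) (hg.comp hf) a

/-- The relation identifying `(x⃗ ∘ σ, a)` with `(x⃗, σ · a)` for bijections `σ`,
on pairs of an injection `Fin n → X` and an element of `A(n)`. -/
def HatRel (A : SFunctor) (X : Type) :
    (Σ n : ℕ, {x : Fin n → X // Function.Injective x} × A.obj n) →
    (Σ n : ℕ, {x : Fin n → X // Function.Injective x} × A.obj n) → Prop :=
  fun p q => ∃ e : Fin p.1 ≃ Fin q.1,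
    (∀ i, q.2.1.1 (e i) = p.2.1.1 i) ∧ A.map e e.surjective p.2.2 = q.2.2

/-- `Â(X) = Σ_n [X over n] ⊗_{S_n} A(n)`. -/
def HatA (A : SFunctor) (X : Type) : Type := Quot (HatRel A X)

/-- The class `[x⃗, a]` in `Â(X)`. -/
def hatMk (A : SFunctor) {X : Type} {n : ℕ} (x : Fin n → X) (hx : Function.Injective x)
    (a : A.obj n) : HatA A X :=
  Quot.mk _ ⟨n, ⟨x, hx⟩, a⟩

/-- The characterizing property of the action of `Â` on functions:
`Â(f)([x⃗,a]) = [y⃗, A(α)(a)]` whenever `f ∘ x⃗ = y⃗ ∘ α` is an epi-mono factorization. -/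
def HatMapSpec (A : SFunctor)
    (F : ∀ (X Y : Type), (X → Y) → HatA A X → HatA A Y) : Prop :=
  ∀ (X Y : Type) (f : X → Y) (n m : ℕ) (x : Fin n → X) (hx : Function.Injective x)
    (a : A.obj n) (α : Fin n → Fin m) (hα : Function.Surjective α)
    (y : Fin m → Y) (hy : Function.Injective y),
    (∀ i, f (x i) = y (α i)) →
    F X Y f (hatMk A x hx a) = hatMk A y hy (A.map α hα a)

/-- A commutative square of sets which is a pullback (elementwise formulation). -/
def IsSetPullback {P A B C : Type} (pa : P → A) (pb : P → B) (f : A → C) (g : B → C) : Prop :=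
  (∀ p, f (pa p) = g (pb p)) ∧ ∀ a b, f a = g b → ∃! p, pa p = a ∧ pb p = b

/-- A commutative square of sets which is a weak pullback (elementwise formulation). -/
def IsWeakSetPullback {P A B C : Type} (pa : P → A) (pb : P → B) (f : A → C) (g : B → C) : Prop :=
  (∀ p, f (pa p) = g (pb p)) ∧ ∀ a b, f a = g b → ∃ p, pa p = a ∧ pb p = b

/-- Naturality of a family `τ n : A(n) → B(n)` with respect to surjections. -/
def SNatTrans (A B : SFunctor) (τ : ∀ n, A.obj n → B.obj n) : Prop :=
  ∀ (n m : ℕ) (f : Fin n → Fin m) (hf : Function.Surjective f) (a : A.obj n),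
    τ m (A.map f hf a) = B.map f hf (τ n a)

/-- The characterizing property of `τ̂ : Â → B̂`, namely `τ̂_X([x⃗,a]) = [x⃗, τ(a)]`. -/
def HatTransSpec (A B : SFunctor) (τ : ∀ n, A.obj n → B.obj n)
    (t : ∀ X : Type, HatA A X → HatA B X) : Prop :=
  ∀ (X : Type) (n : ℕ) (x : Fin n → X) (hx : Function.Injective x) (a : A.obj n),
    t X (hatMk A x hx a) = hatMk B x hx (τ n a)

/-- The relation `(y⃗ ∘ φ, a) ∼ (y⃗, φ·a)` for surjections `φ`, generating the coend
`∫^{n∈S} X^n × A(n)`. -/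
def CoendRel (A : SFunctor) (X : Type) :
    (Σ n : ℕ, (Fin n → X) × A.obj n) → (Σ n : ℕ, (Fin n → X) × A.obj n) → Prop :=
  fun p q => ∃ (φ : Fin p.1 → Fin q.1) (hφ : Function.Surjective φ),
    (∀ i, p.2.1 i = q.2.1 (φ i)) ∧ A.map φ hφ p.2.2 = q.2.2

/-- The coend `∫^{n∈S} X^n × A(n)`, i.e. the value of the left Kan extension of `A`
along the inclusion `S → Set` at `X`. -/
def Coend (A : SFunctor) (X : Type) : Type := Quot (CoendRel A X)

/-- The class of `(x⃗, a)` in the coend. -/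
def coendMk (A : SFunctor) {X : Type} {n : ℕ} (x : Fin n → X) (a : A.obj n) : Coend A X :=
  Quot.mk _ ⟨n, x, a⟩

/-- The functorial action of the left Kan extension: `(x⃗, a) ↦ (f ∘ x⃗, a)`. -/
def coendMap (A : SFunctor) {X Y : Type} (f : X → Y) : Coend A X → Coend A Y :=
  Quot.lift (fun p => coendMk A (fun i => f (p.2.1 i)) p.2.2)
    (by
      rintro ⟨n, x, a⟩ ⟨m, y, b⟩ ⟨φ, hφ, h1, h2⟩
      exact Quot.sound ⟨φ, hφ, fun i => by exact congrArg f (h1 i), h2⟩)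

lemma SFunctor.map_congr (A : SFunctor) {n m : ℕ} {f g : Fin n → Fin m}
    (hf : Function.Surjective f) (hg : Function.Surjective g) (h : f = g) (a : A.obj n) :
    A.map f hf a = A.map g hg a := by subst h; rfl

/-- An epi-mono factorization of a map `Fin n → X`. -/
structure EMFact {X : Type} {n : ℕ} (x : Fin n → X) where
  m : ℕ
  y : Fin m → X
  α : Fin n → Fin m
  hy : Function.Injective y
  hα : Function.Surjective α
  comm : ∀ i, x i = y (α i)

lemma exists_emFact {X : Type} {n : ℕ} (x : Fin n → X) : Nonempty (EMFact x) := by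
  classical
  let e := Fintype.equivFin (Set.range x)
  refine ⟨⟨Fintype.card (Set.range x), fun j => (e.symm j : X),
    fun i => e ⟨x i, ⟨i, rfl⟩⟩, ?_, ?_, ?_⟩⟩
  · intro j k h
    have : e.symm j = e.symm k := Subtype.ext h
    simpa using congrArg e this
  · intro j
    obtain ⟨i, hi⟩ := (e.symm j).2
    refine ⟨i, ?_⟩
    have h : (⟨x i, ⟨i, rfl⟩⟩ : Set.range x) = e.symm j := Subtype.ext hi
    simpa using congrArg e h
  · intro i; simp

noncomputable def emFact {X : Type} {n : ℕ} (x : Fin n → X) : EMFact x :=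
  Classical.choice (exists_emFact x)

/-- Any two epi-mono factorizations of the same map give the same class in `Â(X)`. -/
lemma hat_fact_eq (A : SFunctor) {X : Type} {n m1 m2 : ℕ}
    (y1 : Fin m1 → X) (hy1 : Function.Injective y1) (α1 : Fin n → Fin m1)
    (hα1 : Function.Surjective α1)
    (y2 : Fin m2 → X) (hy2 : Function.Injective y2) (α2 : Fin n → Fin m2)
    (hα2 : Function.Surjective α2)
    (h : ∀ i, y1 (α1 i) = y2 (α2 i)) (a : A.obj n) :
    hatMk A y1 hy1 (A.map α1 hα1 a) = hatMk A y2 hy2 (A.map α2 hα2 a) := by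
  classical
  let s : Fin m1 → Fin n := Function.surjInv hα1
  have hs : ∀ j, α1 (s j) = j := fun j => Function.surjInv_eq hα1 j
  let e0 : Fin m1 → Fin m2 := fun j => α2 (s j)
  have he0 : ∀ j, y2 (e0 j) = y1 j := fun j => by
    rw [show y2 (e0 j) = y1 (α1 (s j)) from (h (s j)).symm, hs]
  have hcomp : ∀ i, e0 (α1 i) = α2 i := by
    intro i
    apply hy2
    rw [he0, h]
  have hinj : Function.Injective e0 := by
    intro j k hjk
    have := congrArg y2 hjk
    rw [he0, he0] at this
    exact hy1 this
  have hsurj : Function.Surjective e0 := by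
    intro k
    obtain ⟨i, hi⟩ := hα2 k
    exact ⟨α1 i, by rw [hcomp, hi]⟩
  let e : Fin m1 ≃ Fin m2 := Equiv.ofBijective e0 ⟨hinj, hsurj⟩
  apply Quot.sound
  refine ⟨e, fun j => he0 j, ?_⟩
  rw [A.map_map]
  exact A.map_congr _ _ (funext hcomp) a

noncomputable def kappa (A : SFunctor) (X : Type) : HatA A X → Coend A X :=
  Quot.lift (fun p => coendMk A p.2.1.1 p.2.2) (by
    rintro ⟨n, ⟨x, hx⟩, a⟩ ⟨m, ⟨y, hy⟩, b⟩ ⟨e, h1, h2⟩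
    exact Quot.sound ⟨e, e.surjective, fun i => (h1 i).symm, h2⟩)

noncomputable def rho (A : SFunctor) (X : Type) : Coend A X → HatA A X :=
  Quot.lift (fun p => hatMk A (emFact p.2.1).y (emFact p.2.1).hy
      (A.map (emFact p.2.1).α (emFact p.2.1).hα p.2.2)) (by
    rintro ⟨n, x, a⟩ ⟨m, z, b⟩ ⟨φ, hφ, h1, h2⟩
    dsimp only at h1 h2 ⊢
    have key := hat_fact_eq A (emFact x).y (emFact x).hy (emFact x).α (emFact x).hα
      (emFact z).y (emFact z).hy ((emFact z).α ∘ φ) ((emFact z).hα.comp hφ)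
      (fun i => by rw [← (emFact x).comm i, h1 i]; exact (emFact z).comm (φ i)) a
    rw [← h2, A.map_map]
    exact key)

lemma rho_kappa (A : SFunctor) (X : Type) (v : HatA A X) : rho A X (kappa A X v) = v := by
  induction v using Quot.ind with
  | _ p =>
    obtain ⟨n, ⟨x, hx⟩, a⟩ := p
    show hatMk A (emFact x).y (emFact x).hy (A.map (emFact x).α (emFact x).hα a) = _
    have key := hat_fact_eq A (emFact x).y (emFact x).hy (emFact x).α (emFact x).hα
      x hx id Function.surjective_id (fun i => ((emFact x).comm i).symm) a
    rw [key]
    show hatMk A x hx (A.map id _ a) = hatMk A x hx a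
    rw [A.map_id]

lemma kappa_rho (A : SFunctor) (X : Type) (w : Coend A X) : kappa A X (rho A X w) = w := by
  induction w using Quot.ind with
  | _ p =>
    obtain ⟨n, x, a⟩ := p
    show coendMk A (emFact x).y (A.map (emFact x).α (emFact x).hα a) = coendMk A x a
    exact (Quot.sound ⟨(emFact x).α, (emFact x).hα, (emFact x).comm, rfl⟩).symm

/-- `Â` is naturally isomorphic to the left Kan extension of `A` along
the inclusion `S → Set`, computed by the coend `∫^{n∈S} X^n × A(n)`: the map
`[x⃗,a] ↦ ‖x⃗,a‖` is a bijection at each `X`, natural in `X`. -/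
theorem hat_iso_kan_extension (A : SFunctor)
    (F : ∀ (X Y : Type), (X → Y) → HatA A X → HatA A Y) (hF : HatMapSpec A F) :
    ∃ κ : ∀ X : Type, HatA A X → Coend A X,
      (∀ X : Type, Function.Bijective (κ X)) ∧
      (∀ (X : Type) (n : ℕ) (x : Fin n → X) (hx : Function.Injective x) (a : A.obj n),
        κ X (hatMk A x hx a) = coendMk A x a) ∧
      (∀ (X Y : Type) (f : X → Y) (v : HatA A X),
        coendMap A f (κ X v) = κ Y (F X Y f v)) := by
  refine ⟨kappa A, fun X => Function.bijective_iff_has_inverse.mpr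
      ⟨rho A X, rho_kappa A X, kappa_rho A X⟩, fun X n x hx a => rfl, ?_⟩
  intro X Y f v
  induction v using Quot.ind with
  | _ p =>
    obtain ⟨n, ⟨x, hx⟩, a⟩ := p
    have hfac := emFact (fun i => f (x i))
    rw [show Quot.mk (HatRel A X) ⟨n, ⟨x, hx⟩, a⟩ = hatMk A x hx a from rfl,
      hF X Y f n hfac.m x hx a hfac.α hfac.hα hfac.y hfac.hy hfac.comm]
    show coendMk A (fun i => f (x i)) a = coendMk A hfac.y (A.map hfac.α hfac.hα a)
    exact Quot.sound ⟨hfac.α, hfac.hα, hfac.comm, rfl⟩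
end

section
/- For every natural transformation τ : A → B of functors A, B : S → Set, the induced natural transformation τ̂ : Â → B̂, defined by τ̂_X([x⃗, a]) = [x⃗, τ_n(a)], is semi-cartesian: all naturality squares at injective functions are pullbacks. -/
/-!
Along an injection `f`, `Â(f)[x⃗, a] = [f ∘ x⃗, a]`, so `Â(f)` is injective and it suffices to
show the square is a weak pullback. If `[f ∘ x⃗, b] = [y⃗, τ a]` in `B̂(Y)`, a bijection `σ`
with `y⃗ ∘ σ = f ∘ x⃗` and `σ · b = τ a` exists, and naturality of `τ` makes `[x⃗, σ⁻¹ · a]`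
the required element of `Â(X)`.
-/

theorem IsWeakSetPullback.isSetPullback {P A B C : Type} {pa : P → A} {pb : P → B}
    {f : A → C} {g : B → C} (h : IsWeakSetPullback pa pb f g) (hpb : Function.Injective pb) :
    IsSetPullback pa pb f g :=
  ⟨h.1, fun a b hab =>
    let ⟨p, hp⟩ := h.2 a b hab
    ⟨p, hp, fun _ hq => hpb (hq.2.trans hp.2.symm)⟩⟩

namespace SFunctor

variable (A : SFunctor)

theorem map_congr_s7 {n m : ℕ} {f g : Fin n → Fin m} (hf : Function.Surjective f)
    (hg : Function.Surjective g) (h : f = g) (a : A.obj n) :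
    A.map f hf a = A.map g hg a := by
  subst h; rfl

theorem map_refl {n : ℕ} (a : A.obj n) : A.map (Equiv.refl (Fin n)) (Equiv.surjective _) a = a :=
  A.map_id a

theorem map_symm_map {n m : ℕ} (e : Fin n ≃ Fin m) (a : A.obj n) :
    A.map e.symm e.symm.surjective (A.map e e.surjective a) = a := by
  rw [A.map_map, A.map_congr_s7 _ Function.surjective_id (by ext; simp), A.map_id]

theorem map_map_symm {n m : ℕ} (e : Fin n ≃ Fin m) (b : A.obj m) :
    A.map e e.surjective (A.map e.symm e.symm.surjective b) = b :=
  A.map_symm_map e.symm b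

theorem map_trans {n m k : ℕ} (e₁ : Fin n ≃ Fin m) (e₂ : Fin m ≃ Fin k) (a : A.obj n) :
    A.map (e₁.trans e₂) (e₁.trans e₂).surjective a =
      A.map e₂ e₂.surjective (A.map e₁ e₁.surjective a) := by
  rw [A.map_map]; rfl

end SFunctor

section Hat

variable {A : SFunctor} {X : Type}

theorem HatRel.equivalence : Equivalence (HatRel A X) where
  refl _ := ⟨Equiv.refl _, fun _ => rfl, A.map_refl _⟩
  symm := by
    rintro ⟨n, ⟨x, hx⟩, a⟩ ⟨m, ⟨y, hy⟩, b⟩ ⟨e, hxy, hab⟩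
    refine ⟨e.symm, fun i => ?_, ?_⟩
    · simpa using (hxy (e.symm i)).symm
    · rw [← hab]; exact A.map_symm_map e a
  trans := by
    rintro ⟨n, ⟨x, hx⟩, a⟩ ⟨m, ⟨y, hy⟩, b⟩ ⟨k, ⟨z, hz⟩, c⟩ ⟨e₁, hxy, hab⟩ ⟨e₂, hyz, hbc⟩
    refine ⟨e₁.trans e₂, fun i => (hyz (e₁ i)).trans (hxy i), ?_⟩
    rw [A.map_trans, ← hbc, ← hab]

@[elab_as_elim]
theorem HatA.ind {motive : HatA A X → Prop}
    (h : ∀ (n : ℕ) (x : Fin n → X) (hx : Function.Injective x) (a : A.obj n),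
      motive (hatMk A x hx a)) (p : HatA A X) : motive p :=
  Quot.ind (fun ⟨_, ⟨x, hx⟩, a⟩ => h _ x hx a) p

theorem hatMk_eq_iff {n m : ℕ} {x : Fin n → X} {hx : Function.Injective x} {a : A.obj n}
    {y : Fin m → X} {hy : Function.Injective y} {b : A.obj m} :
    hatMk A x hx a = hatMk A y hy b ↔
      ∃ e : Fin n ≃ Fin m, (∀ i, y (e i) = x i) ∧ A.map e e.surjective a = b :=
  ⟨fun h => HatRel.equivalence.eqvGen_iff.mp (Quot.eq.mp h), fun h => Quot.sound h⟩

theorem HatMapSpec.map_hatMk_of_injective {F : ∀ (X Y : Type), (X → Y) → HatA A X → HatA A Y}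
    (hF : HatMapSpec A F) {Y : Type} {f : X → Y} (hf : Function.Injective f) {n : ℕ}
    (x : Fin n → X) (hx : Function.Injective x) (a : A.obj n) :
    F X Y f (hatMk A x hx a) = hatMk A (f ∘ x) (hf.comp hx) a := by
  rw [hF X Y f n n x hx a id Function.surjective_id (f ∘ x) (hf.comp hx) (fun _ => rfl),
    A.map_id]

theorem HatMapSpec.injective_of_injective {F : ∀ (X Y : Type), (X → Y) → HatA A X → HatA A Y}
    (hF : HatMapSpec A F) {Y : Type} {f : X → Y} (hf : Function.Injective f) :
    Function.Injective (F X Y f) := by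
  intro p q
  induction p using HatA.ind with | h n x hx a =>
  induction q using HatA.ind with | h m y hy b =>
  simp only [hF.map_hatMk_of_injective hf, hatMk_eq_iff, Function.comp_apply, hf.eq_iff]
  exact id

end Hat

/-- For every natural transformation `τ : A → B` of functors on `S`,
the induced transformation `τ̂ : Â → B̂` is semi-cartesian: naturality squares at
injections are pullbacks. -/
theorem hat_trans_semicartesian (A B : SFunctor)
    (τ : ∀ n, A.obj n → B.obj n) (hτ : SNatTrans A B τ)
    (FA : ∀ (X Y : Type), (X → Y) → HatA A X → HatA A Y) (hFA : HatMapSpec A FA)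
    (FB : ∀ (X Y : Type), (X → Y) → HatA B X → HatA B Y) (hFB : HatMapSpec B FB)
    (t : ∀ X : Type, HatA A X → HatA B X) (ht : HatTransSpec A B τ t)
    (X Y : Type) (f : X → Y) (hf : Function.Injective f) :
    IsSetPullback (t X) (FA X Y f) (FB X Y f) (t Y) := by
  refine IsWeakSetPullback.isSetPullback ⟨fun p => ?_, fun p q hpq => ?_⟩
    (hFA.injective_of_injective hf)
  · induction p using HatA.ind with | h n x hx a =>
    rw [ht, hFA.map_hatMk_of_injective hf, hFB.map_hatMk_of_injective hf, ht]
  · induction p using HatA.ind with | h n x hx b =>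
    induction q using HatA.ind with | h m y hy a =>
    rw [hFB.map_hatMk_of_injective hf, ht, hatMk_eq_iff] at hpq
    obtain ⟨e, hyx, hba⟩ := hpq
    refine ⟨hatMk A x hx (A.map e.symm e.symm.surjective a), ?_, ?_⟩
    · rw [ht, hτ, ← hba, B.map_symm_map]
    · rw [hFA.map_hatMk_of_injective hf, hatMk_eq_iff]
      exact ⟨e, hyx, A.map_map_symm e a⟩
end
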